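/- Let (X,μ) be a non-atomic probability space, T an ergodic automorphism of (X,μ), and φ : X → ℝ integrable. Then the pair (T,φ) is recurrent if and only if ∫ φ dμ = 0, where (T,φ) is recurrent means: for every measurable set A with μ(A) > 0 and every ε > 0 there exists n > 0 such that μ(A ∩ T^{−n}(A) ∩ {x : |∑_{i=0}^{n−1} φ(T^i(x))| < ε}) > 0. -/

import Mathlib

/-!
If `∫ φ > 0`, the maximal ergodic lemma applied to `∫ φ / 2 - φ` gives a set `D` of positive
measure on which `S_n φ ≥ n ∫ φ / 2` for all `n`, so points of `D` never return to `D` with a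
small Birkhoff sum; `∫ φ < 0` is symmetric. Conversely, let `∫ φ = 0` and `δ > 0`. The set where
the sums `S_n (φ - δ)` are bounded above is invariant, so by ergodicity and the maximal lemma it
has full measure, whence `|S_n φ| ≤ C(x) + δ n` almost everywhere. If recurrence failed for `A`
and `ε`, the values `S_i φ (x)` at the times `i` with `T^i x ∈ A` would be `ε`-separated, so
almost every orbit would visit `A` with density zero, although these densities have mean `μ A`.
-/

open Filter Topology MeasureTheory

theorem MeasureTheory.MeasurePreserving.integral_comp_of_aestronglyMeasurable
    {α β : Type*} [MeasurableSpace α] [MeasurableSpace β] {μ : Measure α} {ν : Measure β}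
    {f : α → β} {g : β → ℝ} (hf : MeasurePreserving f μ ν) (hg : AEStronglyMeasurable g ν) :
    ∫ x, g (f x) ∂μ = ∫ y, g y ∂ν := by
  rw [← integral_map hf.aemeasurable (hf.map_eq ▸ hg), hf.map_eq]

section

variable {X : Type*} {T : X → X} {g : X → ℝ}

theorem birkhoffSum_sub_const (c : ℝ) (n : ℕ) (x : X) :
    birkhoffSum T (fun y => g y - c) n x = birkhoffSum T g n x - n * c := by
  simp [birkhoffSum, Finset.sum_sub_distrib]

theorem bddAbove_range_birkhoffSum_comp_iff (x : X) :
    BddAbove (Set.range fun n => birkhoffSum T g n (T x)) ↔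
      BddAbove (Set.range fun n => birkhoffSum T g n x) := by
  constructor
  · rintro ⟨B, hB⟩
    refine ⟨max 0 (g x + B), ?_⟩
    rintro _ ⟨n | n, rfl⟩
    · simp
    · show birkhoffSum T g (n + 1) x ≤ _
      rw [birkhoffSum_succ']
      exact le_max_of_le_right (add_le_add_right (hB ⟨n, rfl⟩) _)
  · rintro ⟨B, hB⟩
    refine ⟨B - g x, ?_⟩
    rintro _ ⟨n, rfl⟩
    have : birkhoffSum T g (n + 1) x ≤ B := hB ⟨n + 1, rfl⟩
    rw [birkhoffSum_succ'] at this
    exact le_sub_iff_add_le'.2 this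

open Finset in
theorem birkhoffAverage_indicator_one_eq {A : Set X} [DecidablePred (· ∈ A)] (N : ℕ) (x : X) :
    birkhoffAverage ℝ T (A.indicator (1 : X → ℝ)) N x =
      (#{i ∈ range N | T^[i] x ∈ A} : ℝ) / N := by
  simp [birkhoffAverage, birkhoffSum, Set.indicator_apply, div_eq_inv_mul]

noncomputable def maxBirkhoffSum (T : X → X) (g : X → ℝ) (n : ℕ) (x : X) : ℝ :=
  partialSups (fun k => birkhoffSum T g k x) n

theorem birkhoffSum_le_maxBirkhoffSum {k n : ℕ} (h : k ≤ n) (x : X) :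
    birkhoffSum T g k x ≤ maxBirkhoffSum T g n x :=
  le_partialSups_of_le (fun k => birkhoffSum T g k x) h

theorem maxBirkhoffSum_nonneg (n : ℕ) (x : X) : 0 ≤ maxBirkhoffSum T g n x := by
  simpa using birkhoffSum_le_maxBirkhoffSum (T := T) (g := g) n.zero_le x

theorem maxBirkhoffSum_mono {m n : ℕ} (h : m ≤ n) (x : X) :
    maxBirkhoffSum T g m x ≤ maxBirkhoffSum T g n x :=
  (partialSups fun k => birkhoffSum T g k x).monotone h

theorem maxBirkhoffSum_zero : maxBirkhoffSum T g 0 = 0 := by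
  ext x
  simp [maxBirkhoffSum]

theorem maxBirkhoffSum_succ (n : ℕ) :
    maxBirkhoffSum T g (n + 1) = maxBirkhoffSum T g n ⊔ birkhoffSum T g (n + 1) := by
  ext x
  exact partialSups_succ (fun k => birkhoffSum T g k x) n

theorem maxBirkhoffSum_le_max_zero_add (n : ℕ) (x : X) :
    maxBirkhoffSum T g n x ≤ max 0 (g x + maxBirkhoffSum T g n (T x)) := by
  refine partialSups_le _ _ _ fun k hk => ?_
  rcases k with _ | k
  · simp
  · rw [birkhoffSum_succ']
    exact le_max_of_le_right (add_le_add_right (birkhoffSum_le_maxBirkhoffSum (by omega) _) _)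

open Finset in
theorem card_le_of_pairwise_le_abs_sub {ι : Type*} (t : Finset ι) (f : ι → ℝ) {ε B : ℝ}
    (hε : 0 < ε) (hB : 0 ≤ B) (hfB : ∀ i ∈ t, |f i| ≤ B)
    (hsep : (t : Set ι).Pairwise fun i j => ε ≤ |f i - f j|) :
    (#t : ℝ) ≤ 2 * B / ε + 2 := by
  have hmaps : ∀ i ∈ t, ⌊f i / ε⌋ ∈ Icc ⌊-B / ε⌋ ⌊B / ε⌋ := fun i hi => by
    have := abs_le.1 (hfB i hi)
    exact mem_Icc.2 ⟨Int.floor_mono (by gcongr; exact this.1),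
      Int.floor_mono (by gcongr; exact this.2)⟩
  have hinj : Set.InjOn (fun i => ⌊f i / ε⌋) t := fun i hi j hj hij => by
    by_contra hne
    have hlt := Int.abs_sub_lt_one_of_floor_eq_floor hij
    rw [← sub_div, abs_div, abs_of_pos hε, div_lt_one hε] at hlt
    exact (hsep hi hj hne).not_gt hlt
  have hIcc : ((#(Icc ⌊-B / ε⌋ ⌊B / ε⌋) : ℕ) : ℝ) = ⌊B / ε⌋ + 1 - ⌊-B / ε⌋ := by
    rw [Int.card_Icc, ← Int.cast_natCast, Int.toNat_of_nonneg]
    · push_cast; ring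
    · have : ⌊-B / ε⌋ ≤ ⌊B / ε⌋ := Int.floor_mono (by gcongr; linarith)
      omega
  calc (#t : ℝ) ≤ #(Icc ⌊-B / ε⌋ ⌊B / ε⌋) := by exact_mod_cast card_le_card_of_injOn _ hmaps hinj
    _ = ⌊B / ε⌋ + 1 - ⌊-B / ε⌋ := hIcc
    _ ≤ B / ε + 1 - (-B / ε - 1) := by
      gcongr
      · exact Int.floor_le _
      · exact (Int.sub_one_lt_floor _).le
    _ = 2 * B / ε + 2 := by ring

open Finset in
theorem tendsto_card_filter_div_atTop_zero (s : ℕ → ℝ) (p : ℕ → Prop) [DecidablePred p]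
    {ε : ℝ} (hε : 0 < ε) (hs : ∀ δ > 0, ∃ C, ∀ n : ℕ, |s n| ≤ C + δ * n)
    (hsep : ∀ i j, i < j → p i → p j → ε ≤ |s j - s i|) :
    Tendsto (fun N : ℕ => (#{i ∈ range N | p i} : ℝ) / N) atTop (𝓝 0) := by
  refine tendsto_order.2 ⟨fun a ha => .of_forall fun N => ha.trans_le (by positivity),
    fun a ha => ?_⟩
  obtain ⟨C, hC⟩ := hs (a * ε / 4) (by positivity)
  have hC0 : 0 ≤ C := by simpa using (abs_nonneg _).trans (hC 0)
  have hcard : ∀ N : ℕ, (#{i ∈ range N | p i} : ℝ) ≤ 2 * (C + a * ε / 4 * N) / ε + 2 := by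
    intro N
    refine card_le_of_pairwise_le_abs_sub _ s hε (by positivity) (fun i hi => ?_) ?_
    · have hiN : (i : ℝ) ≤ N := by exact_mod_cast (mem_range.1 (mem_filter.1 hi).1).le
      exact (hC i).trans (by gcongr)
    · intro i hi j hj hij
      have hpi := (mem_filter.1 hi).2
      have hpj := (mem_filter.1 hj).2
      rcases hij.lt_or_gt with h | h
      · exact abs_sub_comm (s i) (s j) ▸ hsep i j h hpi hpj
      · exact hsep j i h hpj hpi
  have hlim : Tendsto (fun N : ℕ => (2 * C / ε + 2) / N + a / 2) atTop (𝓝 (a / 2)) := by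
    simpa using (tendsto_const_div_atTop_nhds_zero_nat (2 * C / ε + 2)).add_const (a / 2)
  filter_upwards [hlim.eventually_lt_const (half_lt_self ha), eventually_gt_atTop 0] with N hN hN0
  calc (#{i ∈ range N | p i} : ℝ) / N ≤ (2 * (C + a * ε / 4 * N) / ε + 2) / N := by
        gcongr
        exact hcard N
    _ = (2 * C / ε + 2) / N + a / 2 := by
        field_simp
        ring
    _ < a := hN

variable [MeasurableSpace X] {μ : Measure X}

def IsRecurrentPair (μ : Measure X) (T : X → X) (g : X → ℝ) : Prop :=
  ∀ A : Set X, MeasurableSet A → 0 < μ A → ∀ ε : ℝ, 0 < ε → ∃ n : ℕ, 0 < n ∧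
    0 < μ (A ∩ T^[n] ⁻¹' A ∩ {x | |birkhoffSum T g n x| < ε})

theorem IsRecurrentPair.congr_ae {h : X → ℝ} (hT : Measure.QuasiMeasurePreserving T μ μ)
    (hgh : g =ᵐ[μ] h) : IsRecurrentPair μ T g ↔ IsRecurrentPair μ T h := by
  have hsets : ∀ (A : Set X) (ε : ℝ) (n : ℕ),
      μ (A ∩ T^[n] ⁻¹' A ∩ {x | |birkhoffSum T g n x| < ε}) =
        μ (A ∩ T^[n] ⁻¹' A ∩ {x | |birkhoffSum T h n x| < ε}) := fun A ε n => by
    refine measure_congr (EventuallyEq.rfl.inter ?_)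
    filter_upwards [hT.birkhoffSum_ae_eq_of_ae_eq hgh n] with x hx
    change (|birkhoffSum T g n x| < ε) = (|birkhoffSum T h n x| < ε)
    rw [hx]
  simp only [IsRecurrentPair, hsets]

theorem isRecurrentPair_neg_iff : IsRecurrentPair μ T (-g) ↔ IsRecurrentPair μ T g := by
  simp [IsRecurrentPair, birkhoffSum_neg]

theorem measurable_birkhoffSum (hT : Measurable T) (hg : Measurable g) (n : ℕ) :
    Measurable (birkhoffSum T g n) :=
  Finset.measurable_sum _ fun i _ => hg.comp (hT.iterate i)

theorem measurable_birkhoffAverage (hT : Measurable T) (hg : Measurable g) (n : ℕ) :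
    Measurable (birkhoffAverage ℝ T g n) :=
  (measurable_birkhoffSum hT hg n).const_smul ((n : ℝ)⁻¹)

theorem integrable_birkhoffSum (hT : MeasurePreserving T μ μ) (hg : Integrable g μ) (n : ℕ) :
    Integrable (birkhoffSum T g n) μ :=
  integrable_finsetSum _ fun i _ => (hT.iterate i).integrable_comp_of_integrable hg

theorem integral_birkhoffSum (hT : MeasurePreserving T μ μ) (hg : Integrable g μ) (n : ℕ) :
    ∫ x, birkhoffSum T g n x ∂μ = n * ∫ x, g x ∂μ := by
  simp_rw [birkhoffSum]
  rw [integral_finsetSum (f := fun i x => g (T^[i] x)) _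
    fun i _ => (hT.iterate i).integrable_comp_of_integrable hg]
  simp [(hT.iterate _).integral_comp_of_aestronglyMeasurable hg.aestronglyMeasurable]

theorem integral_birkhoffAverage (hT : MeasurePreserving T μ μ) (hg : Integrable g μ) {n : ℕ}
    (hn : n ≠ 0) : ∫ x, birkhoffAverage ℝ T g n x ∂μ = ∫ x, g x ∂μ := by
  simp_rw [birkhoffAverage, smul_eq_mul]
  rw [integral_const_mul, integral_birkhoffSum hT hg, inv_mul_cancel_left₀ (by exact_mod_cast hn)]

theorem measurable_maxBirkhoffSum (hT : Measurable T) (hg : Measurable g) (n : ℕ) :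
    Measurable (maxBirkhoffSum T g n) := by
  induction n with
  | zero => exact maxBirkhoffSum_zero (T := T) (g := g) ▸ measurable_zero
  | succ n ih =>
    rw [maxBirkhoffSum_succ]
    exact ih.sup (measurable_birkhoffSum hT hg _)

theorem integrable_maxBirkhoffSum (hT : MeasurePreserving T μ μ) (hg : Integrable g μ) (n : ℕ) :
    Integrable (maxBirkhoffSum T g n) μ := by
  induction n with
  | zero => exact maxBirkhoffSum_zero (T := T) (g := g) ▸ integrable_zero X ℝ μ
  | succ n ih =>
    rw [maxBirkhoffSum_succ]
    exact ih.sup (integrable_birkhoffSum hT hg _)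

/-- Hopf's maximal ergodic lemma, in Garsia's form. -/
theorem setIntegral_maxBirkhoffSum_pos_nonneg (hT : MeasurePreserving T μ μ) (hgm : Measurable g)
    (hg : Integrable g μ) (n : ℕ) :
    0 ≤ ∫ x in {x | 0 < maxBirkhoffSum T g n x}, g x ∂μ := by
  set M := maxBirkhoffSum T g n
  have hE : MeasurableSet {x | 0 < M x} :=
    measurableSet_lt measurable_const (measurable_maxBirkhoffSum hT.measurable hgm n)
  have hM : Integrable M μ := integrable_maxBirkhoffSum hT hg n
  have hMT : Integrable (fun x => M (T x)) μ := hT.integrable_comp_of_integrable hM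
  have hle : ∀ x, M x - M (T x) ≤ {x | 0 < M x}.indicator g x := fun x => by
    have hmax : M x ≤ max 0 (g x + M (T x)) := maxBirkhoffSum_le_max_zero_add n x
    have hMT0 : 0 ≤ M (T x) := maxBirkhoffSum_nonneg n (T x)
    by_cases hx : 0 < M x
    · rw [Set.indicator_of_mem (show x ∈ {x | 0 < M x} from hx)]
      rcases le_max_iff.1 hmax with h | h <;> linarith
    · rw [Set.indicator_of_notMem (show x ∉ {x | 0 < M x} from hx)]
      linarith [not_lt.1 hx]
  calc 0 = ∫ x, (M x - M (T x)) ∂μ := by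
        rw [integral_sub hM hMT,
          hT.integral_comp_of_aestronglyMeasurable hM.aestronglyMeasurable, sub_self]
    _ ≤ ∫ x, {x | 0 < M x}.indicator g x ∂μ := integral_mono (hM.sub hMT) (hg.indicator hE) hle
    _ = ∫ x in {x | 0 < M x}, g x ∂μ := integral_indicator hE

theorem integral_nonneg_of_ae_exists_birkhoffSum_pos (hT : MeasurePreserving T μ μ)
    (hgm : Measurable g) (hg : Integrable g μ)
    (h : ∀ᵐ x ∂μ, ∃ n, 0 < birkhoffSum T g n x) : 0 ≤ ∫ x, g x ∂μ := by
  set E : ℕ → Set X := fun n => {x | 0 < maxBirkhoffSum T g n x}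
  have hEm : ∀ n, MeasurableSet (E n) := fun n =>
    measurableSet_lt measurable_const (measurable_maxBirkhoffSum hT.measurable hgm n)
  have hEmono : Monotone E := fun m n hmn x hx => hx.trans_le (maxBirkhoffSum_mono hmn x)
  have hEfull : ∀ᵐ x ∂μ, x ∈ ⋃ n, E n := by
    filter_upwards [h] with x ⟨n, hn⟩
    exact Set.mem_iUnion.2 ⟨n, hn.trans_le (birkhoffSum_le_maxBirkhoffSum le_rfl x)⟩
  have hlim : Tendsto (fun n => ∫ x in E n, g x ∂μ) atTop (𝓝 (∫ x in ⋃ n, E n, g x ∂μ)) :=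
    tendsto_setIntegral_of_monotone hEm hEmono hg.integrableOn
  rw [← Measure.restrict_eq_self_of_ae_mem hEfull]
  exact ge_of_tendsto' hlim fun n => setIntegral_maxBirkhoffSum_pos_nonneg hT hgm hg n

theorem integral_nonpos_of_isRecurrentPair [IsProbabilityMeasure μ] (hT : MeasurePreserving T μ μ)
    (hgm : Measurable g) (hg : Integrable g μ) (hrec : IsRecurrentPair μ T g) :
    ∫ x, g x ∂μ ≤ 0 := by
  by_contra! hpos
  set c := ∫ x, g x ∂μ
  have hg' : Integrable (fun y => c / 2 - g y) μ := (integrable_const _).sub hg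
  have hint : ∫ y, c / 2 - g y ∂μ = -(c / 2) := by
    rw [integral_sub (integrable_const _) hg]
    simp only [integral_const, probReal_univ, smul_eq_mul, one_mul]
    ring
  have hsum : ∀ n x,
      birkhoffSum T (fun y => c / 2 - g y) n x = n * (c / 2) - birkhoffSum T g n x :=
    fun n x => by simp [birkhoffSum, Finset.sum_sub_distrib]
  set D := {x | ∀ n : ℕ, n * (c / 2) ≤ birkhoffSum T g n x}
  have hDm : MeasurableSet D := by
    simp only [D, Set.ofPred_forall]
    exact .iInter fun n =>
      measurableSet_le measurable_const (measurable_birkhoffSum hT.measurable hgm n)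
  have hD : 0 < μ D := by
    refine pos_iff_ne_zero.2 fun hD0 => ?_
    have hae : ∀ᵐ x ∂μ, ∃ n, 0 < birkhoffSum T (fun y => c / 2 - g y) n x := by
      filter_upwards [measure_eq_zero_iff_ae_notMem.1 hD0] with x hx
      obtain ⟨n, hn⟩ : ∃ n : ℕ, birkhoffSum T g n x < n * (c / 2) := by simpa [D] using hx
      exact ⟨n, by rw [hsum]; linarith⟩
    have h0 : 0 ≤ ∫ y, c / 2 - g y ∂μ :=
      integral_nonneg_of_ae_exists_birkhoffSum_pos hT (measurable_const.sub hgm) hg' hae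
    linarith
  obtain ⟨n, hn, hret⟩ := hrec D hDm hD (c / 2) (by linarith)
  have hempty : D ∩ T^[n] ⁻¹' D ∩ {x | |birkhoffSum T g n x| < c / 2} = ∅ := by
    refine Set.eq_empty_iff_forall_notMem.2 fun x ⟨⟨hx, _⟩, hsmall⟩ => ?_
    have h1 : (1 : ℝ) ≤ n := by exact_mod_cast hn
    have := le_abs_self (birkhoffSum T g n x)
    simp only [Set.mem_ofPred_eq] at hsmall
    nlinarith [hx n]
  simp [hempty] at hret

theorem ae_bddAbove_birkhoffSum_of_integral_neg (hT : Ergodic T μ) (hgm : Measurable g)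
    (hg : Integrable g μ) (hneg : ∫ x, g x ∂μ < 0) :
    ∀ᵐ x ∂μ, BddAbove (Set.range fun n => birkhoffSum T g n x) := by
  have hU : MeasurableSet {x | BddAbove (Set.range fun n => birkhoffSum T g n x)} :=
    measurableSet_bddAbove_range (measurable_birkhoffSum hT.measurable hgm)
  have hinv : T ⁻¹' {x | BddAbove (Set.range fun n => birkhoffSum T g n x)} =
      {x | BddAbove (Set.range fun n => birkhoffSum T g n x)} :=
    Set.ext fun x => bddAbove_range_birkhoffSum_comp_iff x
  refine (hT.toPreErgodic.ae_mem_or_ae_notMem hU hinv).resolve_right fun hunbdd => ?_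
  have hpos : ∀ᵐ x ∂μ, ∃ n, 0 < birkhoffSum T g n x := by
    filter_upwards [hunbdd] with x hx
    simpa using not_bddAbove_iff.1 hx 0
  linarith [integral_nonneg_of_ae_exists_birkhoffSum_pos hT.toMeasurePreserving hgm hg hpos]

theorem ae_forall_exists_abs_birkhoffSum_le [IsProbabilityMeasure μ] (hT : Ergodic T μ)
    (hgm : Measurable g) (hg : Integrable g μ) (h0 : ∫ x, g x ∂μ = 0) :
    ∀ᵐ x ∂μ, ∀ δ > 0, ∃ C, ∀ n : ℕ, |birkhoffSum T g n x| ≤ C + δ * n := by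
  have hbdd : ∀ f : X → ℝ, Measurable f → Integrable f μ → ∫ x, f x ∂μ = 0 →
      ∀ᵐ x ∂μ, ∀ k : ℕ, ∃ B, ∀ n : ℕ, birkhoffSum T f n x ≤ B + n * (1 / (k + 1)) := by
    intro f hfm hf hf0
    refine ae_all_iff.2 fun k => ?_
    have hneg : ∫ x, f x - 1 / (k + 1) ∂μ < 0 := by
      rw [integral_sub hf (integrable_const _), hf0]
      simp only [integral_const, probReal_univ, one_smul]
      linarith [Nat.one_div_pos_of_nat (α := ℝ) (n := k)]
    have hfk : Integrable (fun x => f x - 1 / (k + 1)) μ := hf.sub (integrable_const _)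
    filter_upwards [ae_bddAbove_birkhoffSum_of_integral_neg hT (hfm.sub_const _) hfk hneg]
      with x ⟨B, hB⟩
    refine ⟨B, fun n => ?_⟩
    have : birkhoffSum T (fun x => f x - 1 / (k + 1)) n x ≤ B := hB ⟨n, rfl⟩
    rw [birkhoffSum_sub_const] at this
    linarith
  filter_upwards [hbdd g hgm hg h0, hbdd (-g) hgm.neg hg.neg (by simp [integral_neg, h0])]
    with x hup hdown δ hδ
  obtain ⟨k, hk⟩ := exists_nat_one_div_lt hδ
  obtain ⟨B₁, hB₁⟩ := hup k
  obtain ⟨B₂, hB₂⟩ := hdown k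
  refine ⟨max B₁ B₂, fun n => ?_⟩
  have hδn : n * (1 / ((k : ℝ) + 1)) ≤ δ * n := by
    rw [mul_comm]
    exact mul_le_mul_of_nonneg_right hk.le n.cast_nonneg
  have hlow := hB₂ n
  rw [birkhoffSum_neg] at hlow
  exact abs_le.2 ⟨by linarith [le_max_right B₁ B₂], by linarith [hB₁ n, le_max_left B₁ B₂]⟩

theorem ae_le_abs_birkhoffSum_sub_of_measure_eq_zero (hT : MeasurePreserving T μ μ)
    {A : Set X} {ε : ℝ}
    (hnull : ∀ n, 0 < n → μ (A ∩ T^[n] ⁻¹' A ∩ {x | |birkhoffSum T g n x| < ε}) = 0) :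
    ∀ᵐ x ∂μ, ∀ i j, i < j → T^[i] x ∈ A → T^[j] x ∈ A →
      ε ≤ |birkhoffSum T g j x - birkhoffSum T g i x| := by
  have hstep : ∀ i n, ∀ᵐ x ∂μ, T^[i] x ∈ A → T^[i + (n + 1)] x ∈ A →
      ε ≤ |birkhoffSum T g (i + (n + 1)) x - birkhoffSum T g i x| := fun i n => by
    filter_upwards [measure_eq_zero_iff_ae_notMem.1
      ((hT.iterate i).quasiMeasurePreserving.preimage_null (hnull (n + 1) n.succ_pos))]
      with x hx hi hj
    rw [birkhoffSum_add, add_sub_cancel_left]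
    by_contra! hlt
    refine hx ⟨⟨hi, ?_⟩, hlt⟩
    rwa [Set.mem_preimage, ← Function.iterate_add_apply, add_comm]
  filter_upwards [ae_all_iff.2 fun i => ae_all_iff.2 (hstep i)] with x hx i j hij
  obtain ⟨n, rfl⟩ := Nat.exists_eq_add_of_lt hij
  exact hx i n

theorem isRecurrentPair_of_integral_eq_zero [IsProbabilityMeasure μ] (hT : Ergodic T μ)
    (hgm : Measurable g) (hg : Integrable g μ) (h0 : ∫ x, g x ∂μ = 0) :
    IsRecurrentPair μ T g := by
  classical
  intro A hA hApos ε hε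
  by_contra! hnull
  have hA1 : Integrable (A.indicator (1 : X → ℝ)) μ := (integrable_const (1 : ℝ)).indicator hA
  have hfreq : ∀ᵐ x ∂μ,
      Tendsto (fun N => birkhoffAverage ℝ T (A.indicator (1 : X → ℝ)) N x) atTop (𝓝 0) := by
    filter_upwards [ae_le_abs_birkhoffSum_sub_of_measure_eq_zero hT.toMeasurePreserving
      fun n hn => nonpos_iff_eq_zero.1 (hnull n hn),
      ae_forall_exists_abs_birkhoffSum_le hT hgm hg h0] with x hsep hsub
    simp_rw [birkhoffAverage_indicator_one_eq]
    exact tendsto_card_filter_div_atTop_zero _ _ hε hsub hsep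
  have hfreq_le : ∀ N x, ‖birkhoffAverage ℝ T (A.indicator (1 : X → ℝ)) N x‖ ≤ 1 := fun N x => by
    rw [birkhoffAverage_indicator_one_eq, Real.norm_of_nonneg (by positivity)]
    refine div_le_one_of_le₀ ?_ N.cast_nonneg
    exact_mod_cast (Finset.card_filter_le _ _).trans (Finset.card_range N).le
  have hlim_zero :
      Tendsto (fun N => ∫ x, birkhoffAverage ℝ T (A.indicator (1 : X → ℝ)) N x ∂μ) atTop (𝓝 0) := by
    simpa using tendsto_integral_of_dominated_convergence (fun _ => 1)
      (fun N => (measurable_birkhoffAverage hT.measurable (measurable_one.indicator hA)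
        N).aestronglyMeasurable)
      (integrable_const 1) (fun N => .of_forall (hfreq_le N)) hfreq
  have hlim_A : Tendsto (fun N => ∫ x, birkhoffAverage ℝ T (A.indicator (1 : X → ℝ)) N x ∂μ) atTop
      (𝓝 (μ.real A)) := by
    refine tendsto_const_nhds.congr' ?_
    filter_upwards [eventually_ne_atTop 0] with N hN
    rw [integral_birkhoffAverage hT.toMeasurePreserving hA1 hN, integral_indicator_one hA]
  have := tendsto_nhds_unique hlim_A hlim_zero
  rw [measureReal_eq_zero_iff] at this
  exact hApos.ne' this

end

theorem atkinson_theorem_general {X : Type*} [MeasurableSpace X]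
    (μ : Measure X) [IsProbabilityMeasure μ]
    (T : X ≃ᵐ X) (hT : Ergodic (⇑T) μ)
    (φ : X → ℝ) (hφ : Integrable φ μ) :
    (∀ A : Set X, MeasurableSet A → 0 < μ A → ∀ ε : ℝ, 0 < ε → ∃ n : ℕ, 0 < n ∧
        0 < μ (A ∩ (⇑T)^[n] ⁻¹' A ∩
          {x | |∑ i ∈ Finset.range n, φ ((⇑T)^[i] x)| < ε}))
      ↔ ∫ x, φ x ∂μ = 0 := by
  change IsRecurrentPair μ T φ ↔ _
  obtain ⟨g, hgm, hφg⟩ : ∃ g : X → ℝ, Measurable g ∧ φ =ᵐ[μ] g :=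
    ⟨_, hφ.aestronglyMeasurable.stronglyMeasurable_mk.measurable,
      hφ.aestronglyMeasurable.ae_eq_mk⟩
  have hg : Integrable g μ := hφ.congr hφg
  rw [IsRecurrentPair.congr_ae hT.quasiMeasurePreserving hφg, integral_congr_ae hφg]
  refine ⟨fun hrec => le_antisymm ?_ ?_, isRecurrentPair_of_integral_eq_zero hT hgm hg⟩
  · exact integral_nonpos_of_isRecurrentPair hT.toMeasurePreserving hgm hg hrec
  · have := integral_nonpos_of_isRecurrentPair hT.toMeasurePreserving hgm.neg hg.neg
      (isRecurrentPair_neg_iff.2 hrec)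
    simpa [integral_neg] using this

/-- **Atkinson's Theorem.** Let `(X, μ)` be a non-atomic probability space, `T` an
ergodic automorphism of `(X, μ)` and `φ : X → ℝ` integrable.  Then the pair `(T, φ)` is
recurrent (for every positive-measure set `A` and every `ε > 0` there is `n > 0` with
`μ(A ∩ T⁻ⁿA ∩ {|S_n φ| < ε}) > 0`) if and only if `∫ φ dμ = 0`. -/
theorem atkinson_theorem {X : Type*} [MeasurableSpace X]
    (μ : Measure X) [IsProbabilityMeasure μ] [NullSingletonClass μ]
    (T : X ≃ᵐ X) (hTpres : MeasurePreserving T μ μ) (hT : Ergodic (⇑T) μ)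
    (φ : X → ℝ) (hφ : Integrable φ μ) :
    (∀ A : Set X, MeasurableSet A → 0 < μ A → ∀ ε : ℝ, 0 < ε → ∃ n : ℕ, 0 < n ∧
        0 < μ (A ∩ (⇑T)^[n] ⁻¹' A ∩
          {x | |∑ i ∈ Finset.range n, φ ((⇑T)^[i] x)| < ε}))
      ↔ ∫ x, φ x ∂μ = 0 :=
  atkinson_theorem_general μ T hT φ hφ
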